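/- arXiv:2604.18984 — 2 statements merged into one kernel-verified Lean document; each statement's English description precedes it below -/
import Mathlib

section
/- The icosahedron graph has exactly 12 induced 5-cycles, namely the neighborhoods of its 12 vertices. -/
open SimpleGraph Filter

/-- The 5-cycle graph on `ZMod 5`. -/
def C5 : SimpleGraph (ZMod 5) where
  Adj i j := j = i + 1 ∨ i = j + 1
  symm := ⟨fun i j h => by revert h; revert i j; decide⟩
  loopless := ⟨fun i h => by revert h; revert i; decide⟩

/-- A finset `s` is an induced pentagon (induced 5-cycle) of `G`. -/
def IsPentagon {V : Type*} (G : SimpleGraph V) (s : Finset V) : Prop :=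
  s.card = 5 ∧ Nonempty (G.induce (s : Set V) ≃g C5)

/-- The pentagon graph of `G`: vertices are the induced 5-cycles, adjacency is
sharing an edge. -/
def pentagonGraph {V : Type*} (G : SimpleGraph V) :
    SimpleGraph {s : Finset V // IsPentagon G s} where
  Adj p q := p ≠ q ∧ ∃ a b, G.Adj a b ∧ a ∈ p.1 ∧ b ∈ p.1 ∧ a ∈ q.1 ∧ b ∈ q.1
  symm := by
    constructor
    rintro p q ⟨h, a, b, hab, h1, h2, h3, h4⟩
    exact ⟨h.symm, a, b, hab, h3, h4, h1, h2⟩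
  loopless := by constructor; rintro p ⟨h, -⟩; exact h rfl
/-- Edge list of the icosahedron graph (skeleton of the regular icosahedron). -/
def icoEdges : List (Fin 12 × Fin 12) :=
  [(0,1),(0,2),(0,3),(0,4),(0,5),(1,2),(2,3),(3,4),(4,5),(5,1),
   (1,6),(1,7),(2,7),(2,8),(3,8),(3,9),(4,9),(4,10),(5,10),(5,6),
   (6,7),(7,8),(8,9),(9,10),(10,6),(11,6),(11,7),(11,8),(11,9),(11,10)]

/-- The icosahedron graph: the 5-regular graph on 12 vertices given by the
skeleton of the regular icosahedron. -/
def icosahedron : SimpleGraph (Fin 12) where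
  Adj a b := (a, b) ∈ icoEdges ∨ (b, a) ∈ icoEdges
  symm := ⟨fun a b h => by revert h; revert a b; decide⟩
  loopless := ⟨fun a h => by revert h; revert a; decide⟩

instance : DecidableRel icosahedron.Adj :=
  fun a b => inferInstanceAs (Decidable ((a, b) ∈ icoEdges ∨ (b, a) ∈ icoEdges))

/-- Edge list of the dodecahedron graph (skeleton of the regular dodecahedron). -/
def dodEdges : List (Fin 20 × Fin 20) :=
  [(0,1),(1,2),(2,3),(3,4),(4,0),
   (0,5),(1,6),(2,7),(3,8),(4,9),
   (5,10),(6,11),(7,12),(8,13),(9,14),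
   (10,6),(11,7),(12,8),(13,9),(14,5),
   (10,15),(11,16),(12,17),(13,18),(14,19),
   (15,16),(16,17),(17,18),(18,19),(19,15)]

/-- The dodecahedron graph: the 3-regular graph on 20 vertices given by the
skeleton of the regular dodecahedron. -/
def dodecahedron : SimpleGraph (Fin 20) where
  Adj a b := (a, b) ∈ dodEdges ∨ (b, a) ∈ dodEdges
  symm := ⟨fun a b h => by revert h; revert a b; decide⟩
  loopless := ⟨fun a h => by revert h; revert a; decide⟩

/-- The tadpole graph `T_{3,1}`: a triangle `0,1,2` with a pendant vertex `3`
attached to `0`. -/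
def tadpole : SimpleGraph (Fin 4) where
  Adj a b := (a, b) ∈ [((0:Fin 4),(1:Fin 4)),(0,2),(1,2),(0,3)] ∨
             (b, a) ∈ [((0:Fin 4),(1:Fin 4)),(0,2),(1,2),(0,3)]
  symm := ⟨fun a b h => by revert h; revert a b; decide⟩
  loopless := ⟨fun a h => by revert h; revert a; decide⟩

instance : DecidableRel C5.Adj := fun i j =>
  inferInstanceAs (Decidable (j = i + 1 ∨ i = j + 1))

/-- Cyclic orderings of the neighborhoods of the icosahedron's vertices. -/
def cyc : Fin 12 → ZMod 5 → Fin 12 :=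
  ![![1,2,3,4,5], ![0,2,7,6,5], ![0,1,7,8,3], ![0,2,8,9,4], ![0,3,9,10,5],
    ![0,1,6,10,4], ![1,5,10,11,7], ![1,2,8,11,6], ![2,3,9,11,7], ![3,4,10,11,8],
    ![4,5,6,11,9], ![6,7,8,9,10]]

lemma iso_of_fun (s : Finset (Fin 12)) (hcard : s.card = 5) (v : ZMod 5 → Fin 12)
    (hinj : Function.Injective v) (hmem : ∀ i, v i ∈ s)
    (hadj : ∀ i j, icosahedron.Adj (v i) (v j) ↔ C5.Adj i j) :
    Nonempty (icosahedron.induce (s : Set (Fin 12)) ≃g C5) := by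
  have hbij : Function.Bijective
      (fun i : ZMod 5 => (⟨v i, hmem i⟩ : (s : Set (Fin 12)))) := by
    apply (Fintype.bijective_iff_injective_and_card _).mpr
    refine ⟨fun i j hij => hinj (congrArg Subtype.val hij), ?_⟩
    simp only [Finset.coe_sort_coe, Fintype.card_coe, hcard]
    rfl
  let e := Equiv.ofBijective _ hbij
  refine ⟨⟨e.symm, ?_⟩⟩
  intro x y
  obtain ⟨i, rfl⟩ := e.surjective x
  obtain ⟨j, rfl⟩ := e.surjective y
  simp only [Equiv.symm_apply_apply]
  exact (hadj i j).symm

set_option maxRecDepth 10000 in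
lemma cyc_inj : ∀ x : Fin 12, Function.Injective (cyc x) := by decide

set_option maxRecDepth 10000 in
lemma cyc_mem : ∀ (x : Fin 12) (i : ZMod 5), cyc x i ∈ icosahedron.neighborFinset x := by
  decide

set_option maxRecDepth 10000 in
lemma cyc_adj : ∀ (x : Fin 12) (i j : ZMod 5),
    icosahedron.Adj (cyc x i) (cyc x j) ↔ C5.Adj i j := by decide

set_option maxRecDepth 10000 in
lemma nf_card : ∀ x : Fin 12, (icosahedron.neighborFinset x).card = 5 := by decide

set_option maxRecDepth 10000 in
lemma nf_inj : Function.Injective (fun x : Fin 12 => icosahedron.neighborFinset x) := by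
  intro x y; revert x y; decide

lemma pentagon_nbhd (x : Fin 12) : IsPentagon icosahedron (icosahedron.neighborFinset x) :=
  ⟨nf_card x, iso_of_fun _ (nf_card x) (cyc x) (cyc_inj x) (cyc_mem x) (cyc_adj x)⟩

lemma pentagon_deg {s : Finset (Fin 12)} (h : IsPentagon icosahedron s) :
    ∀ a ∈ s, (s.filter (icosahedron.Adj a)).card = 2 := by
  obtain ⟨hc, ⟨φ⟩⟩ := h
  intro a ha
  have e1 := φ.mapNeighborSet ⟨a, ha⟩
  have h2 : ∀ w : ZMod 5, Nat.card (C5.neighborSet w) = 2 := by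
    intro w
    rw [Nat.card_eq_fintype_card]
    revert w; decide
  have e2 : (icosahedron.induce (s : Set (Fin 12))).neighborSet ⟨a, ha⟩ ≃
      {b : Fin 12 // b ∈ s.filter (icosahedron.Adj a)} :=
    { toFun := fun b => ⟨b.1.1, Finset.mem_filter.mpr ⟨b.1.2, b.2⟩⟩
      invFun := fun b => ⟨⟨b.1, (Finset.mem_filter.mp b.2).1⟩, (Finset.mem_filter.mp b.2).2⟩
      left_inv := fun b => rfl
      right_inv := fun b => rfl }
  calc (s.filter (icosahedron.Adj a)).card
      = Fintype.card {b : Fin 12 // b ∈ s.filter (icosahedron.Adj a)} :=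
        (Fintype.card_coe _).symm
    _ = Nat.card {b : Fin 12 // b ∈ s.filter (icosahedron.Adj a)} :=
        (Nat.card_eq_fintype_card).symm
    _ = Nat.card ((icosahedron.induce (s : Set (Fin 12))).neighborSet ⟨a, ha⟩) :=
        (Nat.card_congr e2).symm
    _ = Nat.card (C5.neighborSet (φ ⟨a, ha⟩)) := Nat.card_congr (φ.mapNeighborSet _)
    _ = 2 := h2 _

lemma card5 {s : Finset (Fin 12)} (h : s.card = 5) :
    ∃ a b c d e : Fin 12, a < b ∧ b < c ∧ c < d ∧ d < e ∧ s = {a,b,c,d,e} := by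
  have hl : (s.sort (· ≤ ·)).length = 5 := by rw [Finset.length_sort]; exact h
  have hs := List.sortedLT_iff_pairwise.mp (Finset.sortedLT_sort s)
  have ht := Finset.sort_toFinset (s := s) (r := (· ≤ ·))
  rcases hL : s.sort (· ≤ ·) with _ | ⟨a, _ | ⟨b, _ | ⟨c, _ | ⟨d, _ | ⟨e, l⟩⟩⟩⟩⟩ <;>
    rw [hL] at hl <;> simp at hl
  rw [hL] at hs ht
  have hnil : l = [] := by
    cases l with
    | nil => rfl
    | cons f t => simp at hl
  subst hnil
  simp [List.pairwise_cons] at hs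
  refine ⟨a, b, c, d, e, hs.1.1, hs.2.1.1, hs.2.2.1.1, hs.2.2.2, ?_⟩
  rw [← ht]; simp [List.toFinset_cons]

set_option maxRecDepth 100000 in
set_option maxHeartbeats 2000000 in
lemma key : ∀ a b : Fin 12, a < b → ∀ c, b < c → ∀ d, c < d → ∀ e, d < e →
    (∀ x ∈ ({a,b,c,d,e} : Finset (Fin 12)),
      (({a,b,c,d,e} : Finset (Fin 12)).filter (icosahedron.Adj x)).card = 2) →
    ∃ y, ({a,b,c,d,e} : Finset (Fin 12)) = icosahedron.neighborFinset y := by decide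

lemma pentagon_range :
    {s : Finset (Fin 12) | IsPentagon icosahedron s}
      = Set.range (fun x : Fin 12 => icosahedron.neighborFinset x) := by
  ext s
  simp only [Set.mem_setOf_eq, Set.mem_range]
  constructor
  · intro h
    obtain ⟨a, b, c, d, e, h1, h2, h3, h4, rfl⟩ := card5 h.1
    obtain ⟨y, hy⟩ := key a b h1 c h2 d h3 e h4 (pentagon_deg h)
    exact ⟨y, hy.symm⟩
  · rintro ⟨x, rfl⟩
    exact pentagon_nbhd x

/-- The icosahedron graph has exactly 12 induced 5-cycles, namely the
neighborhoods of its 12 vertices. -/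
theorem stmt_4 :
    (∀ x : Fin 12, IsPentagon icosahedron (icosahedron.neighborFinset x)) ∧
    {s : Finset (Fin 12) | IsPentagon icosahedron s}
      = Set.range (fun x : Fin 12 => icosahedron.neighborFinset x) ∧
    Nat.card {s : Finset (Fin 12) // IsPentagon icosahedron s} = 12 := by
  refine ⟨pentagon_nbhd, pentagon_range, ?_⟩
  have h1 : Nat.card {s : Finset (Fin 12) // IsPentagon icosahedron s}
      = Nat.card ↥(Set.range fun x : Fin 12 => icosahedron.neighborFinset x) :=
    Nat.card_congr (Equiv.setCongr pentagon_range)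
  rw [h1, Nat.card_range_of_injective nf_inj, Nat.card_eq_fintype_card,
    Fintype.card_fin]
end

section
/- In the icosahedron graph, if {x, y, z, u} induces a tadpole T_{3,1} with triangle xyz and u adjacent only to x, then the unique vertex at distance 3 from u is adjacent to both y and z. -/
open SimpleGraph Filter

/-!
The icosahedron is distance-regular: around each vertex `u` there are `1, 5, 5, 1` vertices
at distance `0, 1, 2, 3`, the last one being the antipode of `u`, whose neighbourhood is exactly
the sphere of radius `2` about `u`. In a tadpole with pendant vertex `u` attached to `x`, the
triangle vertices `y` and `z` are non-neighbours of `u` reached through `x`, so they lie on that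
sphere and are adjacent to the antipode.
-/

theorem SimpleGraph.lt_edist_of_lt_dist {V : Type*} {G : SimpleGraph V} {u v : V} {n : ℕ}
    (h : n < G.dist u v) : (n : ℕ∞) < G.edist u v := by
  rw [← (Reachable.of_dist_ne_zero (by omega)).coe_dist_eq_edist]
  exact_mod_cast h

def icoAntipode : Fin 12 → Fin 12 := ![11, 9, 10, 6, 7, 8, 3, 4, 5, 1, 2, 0]

theorem eq_icoAntipode_of_two_lt_edist {u w : Fin 12} (h : 2 < icosahedron.edist u w) :
    w = icoAntipode u := by
  obtain ⟨hne, hadj, hcommon⟩ := two_lt_edist_iff.mp h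
  have hcommon' : ∀ t, ¬ (icosahedron.Adj u t ∧ icosahedron.Adj w t) := fun t ht =>
    (Set.eq_empty_iff_forall_notMem.mp hcommon t) ((mem_commonNeighbors _).mpr ht)
  clear h hcommon
  revert u w
  decide

theorem adj_icoAntipode_of_edist_eq_two {u v : Fin 12} (h : icosahedron.edist u v = 2) :
    icosahedron.Adj (icoAntipode u) v := by
  obtain ⟨hne, hadj, t, ht⟩ := edist_eq_two_iff.mp h
  obtain ⟨hut, hvt⟩ := (mem_commonNeighbors _).mp ht
  clear h ht
  revert u t v
  decide

/-- If `{x, y, z, u}` induces a tadpole in the icosahedron with triangle `xyz`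
and `u` adjacent only to `x`, then the unique vertex at distance 3 from `u` is
adjacent to both `y` and `z`. -/
theorem stmt_12 :
    ∀ x y z u : Fin 12,
      icosahedron.Adj x y → icosahedron.Adj y z → icosahedron.Adj x z →
      icosahedron.Adj u x → ¬ icosahedron.Adj u y → ¬ icosahedron.Adj u z →
      ∀ w : Fin 12, icosahedron.dist u w = 3 →
        icosahedron.Adj w y ∧ icosahedron.Adj w z := by
  intro x y z u hxy hyz hxz hux huy huz w hw
  obtain rfl := eq_icoAntipode_of_two_lt_edist
    (lt_edist_of_lt_dist (by omega : 2 < icosahedron.dist u w))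
  have hy : icosahedron.edist u y = 2 := edist_eq_two_iff.mpr
    ⟨fun h => huz (h ▸ hyz), huy, x, (mem_commonNeighbors _).mpr ⟨hux, hxy.symm⟩⟩
  have hz : icosahedron.edist u z = 2 := edist_eq_two_iff.mpr
    ⟨fun h => huy (h ▸ hyz.symm), huz, x, (mem_commonNeighbors _).mpr ⟨hux, hxz.symm⟩⟩
  exact ⟨adj_icoAntipode_of_edist_eq_two hy, adj_icoAntipode_of_edist_eq_two hz⟩
end
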